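/- For the Jaco graph J_n(mx) (f(x) = mx, c = 0) with maximum degree Δ(J_n(mx)) attained first at prime Jaconian vertex v_k with d(v_k) = Δ: the number of arcs satisfies ε(J_n(mx)) = ε(H) + Σ_{i=1}^{k} d⁺(v_i), where H is the complete subgraph induced on v_{k+1}, ..., v_n (the Hope subgraph), so ε(J_n(mx)) = (n−k)(n−k−1)/2 + Σ_{i=1}^{k} d⁺(v_i). -/

import Mathlib

/-- In-degree of vertex `j` in the infinite linear Jaco graph for `f x = m * x + c`:
`d⁻(v_j)` is the number of tails `1 ≤ i < j` with `f i + i - d⁻(v_i) ≥ j`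
(stated subtraction-free as `j + d⁻(v_i) ≤ m * i + c + i`). -/
noncomputable def jacoIndeg (m c : ℕ) (j : ℕ) : ℕ :=
  Nat.strongRecOn j (fun j ih =>
    ((Finset.Ico 1 j).attach.filter (fun i =>
      j + ih i.1 (Finset.mem_Ico.mp i.2).2 ≤ m * i.1 + c + i.1)).card)

/-- `(v_i, v_j)` is an arc of the infinite Jaco graph `J_∞(mx + c)` iff `1 ≤ i < j` and
`f(i) + i - d⁻(v_i) ≥ j`. -/
def JacoArc (m c i j : ℕ) : Prop :=
  1 ≤ i ∧ i < j ∧ j + jacoIndeg m c i ≤ m * i + c + i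

noncomputable instance (m c i j : ℕ) : Decidable (JacoArc m c i j) := by
  unfold JacoArc; infer_instance

/-- Out-degree of `v_i` in the infinite Jaco graph `J_∞(mx + c)`. -/
noncomputable def jacoOutdegInf (m c i : ℕ) : ℕ := {j | JacoArc m c i j}.ncard

/-- Out-degree of `v_i` in the finite Jaco graph `J_n(mx + c)`. -/
noncomputable def jacoOutdeg (m c n i : ℕ) : ℕ :=
  ((Finset.Icc 1 n).filter (fun j => JacoArc m c i j)).card

/-- Total degree of `v_i` in the underlying graph of `J_n(mx + c)`
(for `i ≤ n` the in-degree in `J_n` agrees with that in `J_∞`). -/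
noncomputable def jacoDeg (m c n i : ℕ) : ℕ := jacoIndeg m c i + jacoOutdeg m c n i

/-- Number of arcs of the finite Jaco graph `J_n(mx + c)`. -/
noncomputable def jacoArcs (m c n : ℕ) : ℕ :=
  (((Finset.Icc 1 n) ×ˢ (Finset.Icc 1 n)).filter (fun p => JacoArc m c p.1 p.2)).card

/-!
Write `r(i) = m i + i - d⁻(v_i)` for the head of the last arc out of `v_i` in `J_∞(mx)`.
Since `d⁻(v_{i+1}) ≤ d⁻(v_i) + 1` and `m ≥ 1`, `r` is nondecreasing. A vertex `v_i` with
`r(i) < n` has degree `d⁻(v_i) + (r(i) - i) = m i` in `J_n`, strictly increasing in `i`.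
So if some `v_i` with `i > k` had `r(i) < n`, then also `r(k) < n` and `d(v_i) = m i > m k = d(v_k)`,
contradicting the maximality of `d(v_k)`. Hence every `v_i` with `i > k` is joined to all of
`v_{i+1}, …, v_n`, and these vertices contribute `∑_{k < i ≤ n} (n - i) = (n-k)(n-k-1)/2` arcs.
-/

open Finset

lemma jacoIndeg_eq (m c j : ℕ) :
    jacoIndeg m c j = ((Ico 1 j).filter (fun i => j + jacoIndeg m c i ≤ m * i + c + i)).card := by
  rw [jacoIndeg, Nat.strongRecOn, WellFounded.fix_eq, card_filter, card_filter]
  exact sum_attach (Ico 1 j) (fun i => if j + jacoIndeg m c i ≤ m * i + c + i then 1 else 0)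

lemma jacoIndeg_le (m c j : ℕ) : jacoIndeg m c j ≤ j - 1 := by
  rw [jacoIndeg_eq, ← Nat.card_Ico 1 j]
  exact card_filter_le _ _

lemma jacoIndeg_succ_le (m c i : ℕ) : jacoIndeg m c (i + 1) ≤ jacoIndeg m c i + 1 := by
  rw [jacoIndeg_eq m c (i + 1), jacoIndeg_eq m c i]
  refine (card_le_card fun x hx => ?_).trans (card_insert_le i _)
  simp only [mem_filter, mem_Ico, mem_insert] at hx ⊢
  omega

/-- The head of the last arc out of `v_i` in `J_∞(mx + c)`. -/
noncomputable def jacoReach (m c i : ℕ) : ℕ := m * i + c + i - jacoIndeg m c i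

lemma jacoArc_iff {m c i j : ℕ} : JacoArc m c i j ↔ 1 ≤ i ∧ i < j ∧ j ≤ jacoReach m c i := by
  unfold JacoArc jacoReach
  omega

lemma jacoReach_monotone {m : ℕ} (hm : 1 ≤ m) (c : ℕ) : Monotone (jacoReach m c) := by
  refine monotone_nat_of_le_succ fun i => ?_
  have h₁ := jacoIndeg_le m c i
  have h₂ := jacoIndeg_succ_le m c i
  have h₃ : m * (i + 1) = m * i + m := mul_add_one m i
  unfold jacoReach
  omega

lemma jacoOutdeg_eq (m c n : ℕ) {i : ℕ} (hi : 1 ≤ i) :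
    jacoOutdeg m c n i = min n (jacoReach m c i) - i := by
  have : (Icc 1 n).filter (JacoArc m c i) = Icc (i + 1) (min n (jacoReach m c i)) := by
    ext j
    simp only [mem_filter, mem_Icc, jacoArc_iff, le_min_iff]
    omega
  rw [jacoOutdeg, this, Nat.card_Icc]
  omega

lemma jacoOutdeg_of_le_jacoReach (m c : ℕ) {n i : ℕ} (hi : 1 ≤ i)
    (h : n ≤ jacoReach m c i) : jacoOutdeg m c n i = n - i := by
  rw [jacoOutdeg_eq m c n hi, min_eq_left h]

lemma jacoDeg_of_jacoReach_lt {m : ℕ} (hm : 1 ≤ m) (c : ℕ) {n i : ℕ} (hi : 1 ≤ i)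
    (h : jacoReach m c i < n) : jacoDeg m c n i = m * i + c := by
  have := jacoIndeg_le m c i
  have : i ≤ m * i := Nat.le_mul_of_pos_left i hm
  rw [jacoDeg, jacoOutdeg_eq m c n hi, min_eq_right h.le]
  unfold jacoReach
  omega

lemma le_jacoReach_of_isMaxDeg {m c n k i : ℕ} (hm : 1 ≤ m) (hk : 1 ≤ k)
    (hmax : ∀ v : ℕ, 1 ≤ v → v ≤ n → jacoDeg m c n v ≤ jacoDeg m c n k)
    (hki : k < i) (hin : i ≤ n) : n ≤ jacoReach m c i := by
  by_contra! hi
  have hi1 : 1 ≤ i := hk.trans hki.le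
  have hk' : jacoReach m c k < n := (jacoReach_monotone hm c hki.le).trans_lt hi
  have hdeg := hmax i hi1 hin
  rw [jacoDeg_of_jacoReach_lt hm c hi1 hi, jacoDeg_of_jacoReach_lt hm c hk hk'] at hdeg
  have : m * k < m * i := Nat.mul_lt_mul_of_pos_left hki hm
  omega

lemma jacoArcs_eq_sum_jacoOutdeg (m c n : ℕ) :
    jacoArcs m c n = ∑ i ∈ Icc 1 n, jacoOutdeg m c n i := by
  rw [jacoArcs, card_filter, sum_product]
  simp only [jacoOutdeg, card_filter]

lemma sum_Ioc_tsub_eq (k n : ℕ) :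
    ∑ i ∈ Ioc k n, (n - i) = (n - k) * (n - k - 1) / 2 := by
  rw [← sum_range_id (n - k)]
  apply sum_nbij' (fun i => n - i) (fun j => n - j) <;> intro i hi <;>
    simp only [mem_Ioc, mem_range] at hi ⊢ <;> omega

theorem jaco_arcs_hope_general (m n k : ℕ) (hm : 1 ≤ m) (hk1 : 1 ≤ k) (hkn : k ≤ n)
    (hmax : ∀ v : ℕ, 1 ≤ v → v ≤ n → jacoDeg m 0 n v ≤ jacoDeg m 0 n k) :
    jacoArcs m 0 n = (n - k) * (n - k - 1) / 2 + ∑ i ∈ Finset.Icc 1 k, jacoOutdeg m 0 n i := by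
  have hope : ∑ i ∈ Ioc k n, jacoOutdeg m 0 n i = ∑ i ∈ Ioc k n, (n - i) := by
    refine sum_congr rfl fun i hi => ?_
    obtain ⟨hki, hin⟩ := mem_Ioc.mp hi
    exact jacoOutdeg_of_le_jacoReach m 0 (hk1.trans hki.le)
      (le_jacoReach_of_isMaxDeg hm hk1 hmax hki hin)
  have hIcc (j : ℕ) : Icc 1 j = Ioc 0 j := Icc_add_one_left_eq_Ioc 0 j
  rw [jacoArcs_eq_sum_jacoOutdeg, hIcc, hIcc,
    ← sum_Ioc_consecutive _ (Nat.zero_le k) hkn, hope, sum_Ioc_tsub_eq, add_comm]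

/-- If `v_k` is the prime Jaconian vertex of `J_n(mx)` (smallest index attaining the
maximum total degree), then
`ε(J_n(mx)) = (n-k)(n-k-1)/2 + Σ_{i=1}^{k} d⁺(v_i)`. -/
theorem jaco_arcs_hope (m n k : ℕ) (hm : 1 ≤ m) (hk1 : 1 ≤ k) (hkn : k ≤ n)
    (hmax : ∀ v : ℕ, 1 ≤ v → v ≤ n → jacoDeg m 0 n v ≤ jacoDeg m 0 n k)
    (hmin : ∀ v : ℕ, 1 ≤ v → v < k → jacoDeg m 0 n v < jacoDeg m 0 n k) :
    jacoArcs m 0 n = (n - k) * (n - k - 1) / 2 + ∑ i ∈ Finset.Icc 1 k, jacoOutdeg m 0 n i :=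
  jaco_arcs_hope_general m n k hm hk1 hkn hmax
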